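/- arXiv:1309.1545 — 2 statements merged into one kernel-verified Lean document; each statement's English description precedes it below -/
import Mathlib

section
/- Let T be a finite tree with diameter at least 3 and maximum degree Δ ≥ 3, and let h ≥ 1 be an integer. Then max{Δ₂(T), 2h + Δ − 1} ≤ σ_{h,1,1}(T) ≤ σ*_{h,1,1}(T) ≤ max{h + 2Δ − 1, 2h + Δ − 1}. -/
open SimpleGraph

/-- An `L(h,p,p)`-labelling of `G` with span `ℓ`: labels in `{0,…,ℓ}`, labels of vertices at
distance 1 differ by at least `h`, labels of vertices at distance 2 or 3 differ by at least `p`. -/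
def IsLLabelling {V : Type} (G : SimpleGraph V) (h p ℓ : ℕ) (f : V → ℕ) : Prop :=
  (∀ v, f v ≤ ℓ) ∧
  (∀ u v, G.dist u v = 1 → (h : ℤ) ≤ |(f u : ℤ) - (f v : ℤ)|) ∧
  (∀ u v, G.dist u v = 2 ∨ G.dist u v = 3 → (p : ℤ) ≤ |(f u : ℤ) - (f v : ℤ)|)

/-- `λ_{h,p,p}(G)`: the minimum span of an `L(h,p,p)`-labelling of `G`. -/
noncomputable def lambdaNum {V : Type} (G : SimpleGraph V) (h p : ℕ) : ℕ :=
  sInf {ℓ : ℕ | ∃ f : V → ℕ, IsLLabelling G h p ℓ f}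

/-- A circular interval modulo `n`: a set of residues of the form `{a, a+1, …, a+s}` mod `n`. -/
def IsCircInterval (n : ℕ) (I : Set (ZMod n)) : Prop :=
  ∃ (a : ZMod n) (s : ℕ), I = {x : ZMod n | ∃ i : ℕ, i ≤ s ∧ x = a + (i : ZMod n)}

/-- An elegant `L(h,p,p)`-labelling: additionally each vertex `u` has a circular interval `I u`
modulo `ℓ+1` containing the labels of all neighbours of `u`, with `I u ∩ I v = ∅` for edges `uv`. -/
def IsElegantLLabelling {V : Type} (G : SimpleGraph V) (h p ℓ : ℕ) (f : V → ℕ) : Prop :=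
  IsLLabelling G h p ℓ f ∧
  ∃ I : V → Set (ZMod (ℓ + 1)),
    (∀ u, IsCircInterval (ℓ + 1) (I u)) ∧
    (∀ u w, G.Adj u w → ((f w : ZMod (ℓ + 1)) ∈ I u)) ∧
    (∀ u v, G.Adj u v → I u ∩ I v = ∅)

/-- `λ*_{h,p,p}(G)`: the minimum span of an elegant `L(h,p,p)`-labelling of `G`. -/
noncomputable def lambdaStar {V : Type} (G : SimpleGraph V) (h p : ℕ) : ℕ :=
  sInf {ℓ : ℕ | ∃ f : V → ℕ, IsElegantLLabelling G h p ℓ f}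

/-- The `ℓ`-cyclic distance between labels `a` and `b`. -/
def cycDist (ℓ a b : ℕ) : ℤ :=
  min |(a : ℤ) - (b : ℤ)| ((ℓ : ℤ) - |(a : ℤ) - (b : ℤ)|)

/-- A `C(h,p,p)`-labelling of `G` with span `ℓ`: labels in `{0,…,ℓ-1}`, and the `ℓ`-cyclic distance
between labels of vertices at distance 1 (resp. 2 or 3) is at least `h` (resp. `p`). -/
def IsCLabelling {V : Type} (G : SimpleGraph V) (h p ℓ : ℕ) (f : V → ℕ) : Prop :=
  (∀ v, f v < ℓ) ∧
  (∀ u v, G.dist u v = 1 → (h : ℤ) ≤ cycDist ℓ (f u) (f v)) ∧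
  (∀ u v, G.dist u v = 2 ∨ G.dist u v = 3 → (p : ℤ) ≤ cycDist ℓ (f u) (f v))

/-- `σ_{h,p,p}(G)`: the minimum positive `ℓ` such that `G` has a `C(h,p,p)`-labelling of span `ℓ`. -/
noncomputable def sigmaNum {V : Type} (G : SimpleGraph V) (h p : ℕ) : ℕ :=
  sInf {ℓ : ℕ | 0 < ℓ ∧ ∃ f : V → ℕ, IsCLabelling G h p ℓ f}

/-- An elegant `C(h,p,p)`-labelling: additionally each vertex `u` has a circular interval `I u`
modulo `ℓ` containing the labels of all neighbours of `u`, with `I u ∩ I v = ∅` for edges `uv`. -/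
def IsElegantCLabelling {V : Type} (G : SimpleGraph V) (h p ℓ : ℕ) (f : V → ℕ) : Prop :=
  IsCLabelling G h p ℓ f ∧
  ∃ I : V → Set (ZMod ℓ),
    (∀ u, IsCircInterval ℓ (I u)) ∧
    (∀ u w, G.Adj u w → ((f w : ZMod ℓ) ∈ I u)) ∧
    (∀ u v, G.Adj u v → I u ∩ I v = ∅)

/-- `σ*_{h,p,p}(G)`: the minimum positive `ℓ` such that `G` has an elegant `C(h,p,p)`-labelling
of span `ℓ`. -/
noncomputable def sigmaStar {V : Type} (G : SimpleGraph V) (h p : ℕ) : ℕ :=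
  sInf {ℓ : ℕ | 0 < ℓ ∧ ∃ f : V → ℕ, IsElegantCLabelling G h p ℓ f}

/-- `Δ₂(G) = max over edges uv of (deg u + deg v)`. -/
noncomputable def deltaTwo {V : Type} (G : SimpleGraph V) [Fintype V] [DecidableRel G.Adj] : ℕ :=
  sSup {d : ℕ | ∃ u v : V, G.Adj u v ∧ d = G.degree u + G.degree v}


namespace St18

/-- position of `x` relative to base `b`, modulo `L` -/
def posm (L b x : ℕ) : ℕ := (x + L - b) % L

/-- natural cyclic distance -/
def natCyc (L a b : ℕ) : ℕ := min (posm L b a) (posm L a b)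

lemma posm_lt {L b x : ℕ} (hL : 0 < L) : posm L b x < L := Nat.mod_lt _ hL

lemma posm_spec {L b x : ℕ} (hb : b < L) (hx : x < L) :
    posm L b x = if b ≤ x then x - b else x + L - b := by
  unfold posm
  split_ifs with hc
  · have h1 : x + L - b = (x - b) + L := by omega
    rw [h1, Nat.add_mod_right, Nat.mod_eq_of_lt (by omega)]
  · exact Nat.mod_eq_of_lt (by omega)

lemma posm_add {L b s : ℕ} (hb : b < L) (hs : s < L) : posm L b ((b + s) % L) = s := by
  have hm : (b + s) % L = if b + s < L then b + s else b + s - L := by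
    split_ifs with hc
    · exact Nat.mod_eq_of_lt hc
    · rw [Nat.mod_eq_sub_mod (by omega), Nat.mod_eq_of_lt (by omega)]
  rw [hm]
  split_ifs with hc
  · rw [posm_spec hb (by omega)]; split_ifs <;> omega
  · rw [posm_spec hb (by omega)]; split_ifs <;> omega

lemma posm_recover {L b x : ℕ} (hb : b < L) (hx : x < L) : x = (b + posm L b x) % L := by
  rw [posm_spec hb hx]
  split_ifs with hc
  · rw [Nat.mod_eq_of_lt (by omega)]; omega
  · have h1 : b + (x + L - b) = x + L := by omega
    rw [h1, Nat.add_mod_right, Nat.mod_eq_of_lt hx]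

lemma posm_rel {L b s t : ℕ} (hb : b < L) (hs : s < L) (ht : t < L) :
    posm L ((b + s) % L) ((b + t) % L) = (t + L - s) % L := by
  have hbs : (b + s) % L = if b + s < L then b + s else b + s - L := by
    split_ifs with hc
    · exact Nat.mod_eq_of_lt hc
    · rw [Nat.mod_eq_sub_mod (by omega), Nat.mod_eq_of_lt (by omega)]
  have hbt : (b + t) % L = if b + t < L then b + t else b + t - L := by
    split_ifs with hc
    · exact Nat.mod_eq_of_lt hc
    · rw [Nat.mod_eq_sub_mod (by omega), Nat.mod_eq_of_lt (by omega)]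
  have hts : (t + L - s) % L = if s ≤ t then t - s else t + L - s := by
    split_ifs with hc
    · have h1 : t + L - s = (t - s) + L := by omega
      rw [h1, Nat.add_mod_right, Nat.mod_eq_of_lt (by omega)]
    · exact Nat.mod_eq_of_lt (by omega)
  rw [hbs, hbt, hts]
  split_ifs with h1 h2 h3 h2 h3 h3 h3 <;>
    rw [posm_spec (by omega) (by omega)] <;> split_ifs <;> omega

lemma natCyc_self {L a : ℕ} (ha : a < L) : natCyc L a a = 0 := by
  unfold natCyc posm
  have : a + L - a = L := by omega
  simp [this]

lemma natCyc_comm (L a b : ℕ) : natCyc L a b = natCyc L b a := by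
  unfold natCyc; omega

lemma cycDist_eq_natCyc {L a b : ℕ} (ha : a < L) (hb : b < L) :
    (min |(a : ℤ) - (b : ℤ)| ((L : ℤ) - |(a : ℤ) - (b : ℤ)|)) = (natCyc L a b : ℤ) := by
  unfold natCyc
  rcases le_total b a with hc | hc
  · rw [posm_spec hb ha, posm_spec ha hb]
    have habs : |(a : ℤ) - (b : ℤ)| = ((a - b : ℕ) : ℤ) := by
      rw [abs_of_nonneg (by push_cast; omega)]; push_cast; omega
    rw [habs]
    split_ifs <;> push_cast <;> omega
  · rw [posm_spec hb ha, posm_spec ha hb]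
    have habs : |(a : ℤ) - (b : ℤ)| = ((b - a : ℕ) : ℤ) := by
      rw [abs_of_nonpos (by push_cast; omega), neg_sub]; push_cast; omega
    rw [habs]
    split_ifs <;> push_cast <;> omega



section
variable {L D h : ℕ}

/-- Given parent's data, compute child's interval base offset `w` (relative to `bu`). -/
def mkw (L D h s z : ℕ) : ℕ :=
  min (max (max D (s + h)) (z - (D - 1))) (min (L - 1) (L + s - h) - (D - 1))

/-- Main arithmetic step of the construction. -/
theorem step_works (hh : 1 ≤ h) (hD : 3 ≤ D) (hL1 : h + 2 * D - 1 ≤ L) (hL2 : 2 * h + D - 1 ≤ L)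
    {bu fu : ℕ} (hbu : bu < L) (hfu : fu < L)
    (hfuI : ∀ i < D, h ≤ natCyc L fu ((bu + i) % L))
    {s : ℕ} (hs : s < D) :
    ∀ w, w = mkw L D h s (posm L bu fu) →
    ((bu + s) % L < L ∧ (bu + w) % L < L) ∧
    (∀ i < D, h ≤ natCyc L ((bu + s) % L) (((bu + w) % L + i) % L)) ∧
    posm L ((bu + w) % L) fu < D ∧
    posm L bu ((bu + s) % L) = s ∧
    (∀ x < L, ¬(posm L bu x < D ∧ posm L ((bu + w) % L) x < D)) := by
  intro w hw
  have hL0 : 0 < L := by omega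
  set z := posm L bu fu with hz
  have hzlt : z < L := posm_lt hL0
  -- facts about z from hfuI
  have hzfact : ∀ i < D, h ≤ min ((z + L - i) % L) ((i + L - z) % L) := by
    intro i hi
    have := hfuI i hi
    have hfu2 : fu = (bu + z) % L := posm_recover hbu hfu
    rw [hfu2] at this
    unfold natCyc at this
    rwa [posm_rel hbu (by omega) hzlt, posm_rel hbu hzlt (by omega)] at this
  have hzD : D ≤ z := by
    by_contra hc
    have := hzfact z (by omega)
    have h0 : (z + L - z) % L = 0 := by
      have : z + L - z = L := by omega
      simp [this]
    omega
  have hzs : z > s := by omega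
  have hzball : z ≥ s + h ∧ z ≤ L + s - h := by
    have := hzfact s (by omega)
    have e1 : (z + L - s) % L = z - s := by
      rw [Nat.mod_eq_sub_mod (by omega), Nat.mod_eq_of_lt (by omega)]; omega
    have e2 : (s + L - z) % L = s + L - z := Nat.mod_eq_of_lt (by omega)
    omega
  set lo := max D (s + h) with hlo
  set hi := min (L - 1) (L + s - h) with hhi
  have hwin : lo + (D - 1) ≤ hi := by omega
  have hzin : lo ≤ z ∧ z ≤ hi := by omega
  have hwfacts : lo ≤ w ∧ w ≤ z ∧ z ≤ w + (D - 1) ∧ w + (D - 1) ≤ hi := by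
    rw [hw]; unfold mkw; omega
  have hwlt : w < L := by omega
  have hwD : D ≤ w := by omega
  refine ⟨⟨Nat.mod_lt _ hL0, Nat.mod_lt _ hL0⟩, ?_, ?_, posm_add hbu (by omega), ?_⟩
  · -- labels in child's interval are far from fv
    intro i hi2
    have hcomp : ((bu + w) % L + i) % L = (bu + (w + i)) % L := by
      rw [Nat.mod_add_mod, Nat.add_assoc]
    rw [hcomp]
    set y := w + i with hy
    have hyin : lo ≤ y ∧ y ≤ hi := by omega
    have hylt : y < L := by omega
    unfold natCyc
    rw [posm_rel hbu hylt (by omega), posm_rel hbu (by omega) hylt]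
    have e1 : (y + L - s) % L = y - s := by
      rw [Nat.mod_eq_sub_mod (by omega), Nat.mod_eq_of_lt (by omega)]; omega
    have e2 : (s + L - y) % L = s + L - y := Nat.mod_eq_of_lt (by omega)
    omega
  · -- fu is in child's interval
    have hfu2 : fu = (bu + z) % L := posm_recover hbu hfu
    rw [hfu2, posm_rel hbu hwlt hzlt]
    have : (z + L - w) % L = z - w := by
      rw [Nat.mod_eq_sub_mod (by omega), Nat.mod_eq_of_lt (by omega)]; omega
    omega
  · -- disjointness of parent and child's intervals
    intro x hx ⟨h1, h2⟩
    set y := posm L bu x with hyd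
    have hxr : x = (bu + y) % L := posm_recover hbu hx
    rw [hxr, posm_rel hbu hwlt (by exact posm_lt hL0)] at h2
    have : (y + L - w) % L = y + L - w := Nat.mod_eq_of_lt (by omega)
    omega

/-- Root interval arithmetic. -/
theorem root_works (hh : 1 ≤ h) (hD : 3 ≤ D) (hL1 : h + 2 * D - 1 ≤ L) (hL2 : 2 * h + D - 1 ≤ L) :
    (0 < L ∧ h < L) ∧ (∀ i < D, h ≤ natCyc L 0 ((h + i) % L)) ∧ D ≤ posm L h 0 := by
  have hL0 : 0 < L := by omega
  refine ⟨⟨hL0, by omega⟩, ?_, ?_⟩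
  · intro i hi
    have e0 : (h + i) % L = h + i := Nat.mod_eq_of_lt (by omega)
    unfold natCyc
    rw [e0, posm_spec (by omega) (by omega), posm_spec (by omega) (by omega)]
    split_ifs <;> omega
  · rw [posm_spec (by omega) (by omega)]
    split_ifs <;> omega

end


section TreePart
open SimpleGraph Finset

variable {V : Type} [Fintype V] [DecidableEq V] (G : SimpleGraph V) (hT : G.IsTree) (r : V)

/-- the unique path from `v` to the root `r` -/
noncomputable def pth (v : V) : G.Walk v r := (hT.existsUnique_path v r).choose

lemma pth_isPath (v : V) : (pth G hT r v).IsPath := (hT.existsUnique_path v r).choose_spec.1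

lemma pth_unique {v : V} (q : G.Walk v r) (hq : q.IsPath) : q = pth G hT r v :=
  (hT.existsUnique_path v r).choose_spec.2 q hq

/-- parent of a vertex -/
noncomputable def par (v : V) : V := (pth G hT r v).getVert 1

/-- depth of a vertex -/
noncomputable def dep (v : V) : ℕ := (pth G hT r v).length

lemma pth_r : pth G hT r r = SimpleGraph.Walk.nil :=
  (pth_unique G hT r SimpleGraph.Walk.nil SimpleGraph.Walk.IsPath.nil).symm

lemma par_r : par G hT r r = r := by
  unfold par; rw [pth_r]; exact SimpleGraph.Walk.getVert_of_length_le _ (by simp)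

lemma dep_r : dep G hT r r = 0 := by unfold dep; rw [pth_r]; rfl

lemma par_spec {v : V} (hv : v ≠ r) :
    G.Adj v (par G hT r v) ∧ dep G hT r (par G hT r v) + 1 = dep G hT r v := by
  have hnn : ¬ (pth G hT r v).Nil := SimpleGraph.Walk.not_nil_of_ne hv
  obtain ⟨u, hadj, q, hq⟩ := SimpleGraph.Walk.not_nil_iff.mp hnn
  have hpar : par G hT r v = u := by
    unfold par; rw [hq, SimpleGraph.Walk.getVert_cons_succ, SimpleGraph.Walk.getVert_zero]
  have hqpath : q.IsPath := by
    have := pth_isPath G hT r v; rw [hq] at this; exact this.of_cons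
  have hqe : q = pth G hT r u := pth_unique G hT r q hqpath
  constructor
  · rw [hpar]; exact hadj
  · rw [hpar]; unfold dep; rw [← hqe, hq]; simp

lemma dep_pos {v : V} (hv : v ≠ r) : 0 < dep G hT r v := by
  have := (par_spec G hT r hv).2; omega

/-- for each edge, one endpoint is the parent of the other -/
lemma adj_par {u v : V} (hadj : G.Adj u v) : par G hT r u = v ∨ par G hT r v = u := by
  by_cases hu : u ∈ (pth G hT r v).support
  · right
    have hq : ((pth G hT r v).takeUntil u hu).IsPath := (pth_isPath G hT r v).takeUntil hu
    have he : (SimpleGraph.Walk.cons hadj.symm SimpleGraph.Walk.nil : G.Walk v u).IsPath := by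
      simp [SimpleGraph.Walk.cons_isPath_iff, hadj.ne']
    have huniq := (hT.existsUnique_path v u)
    have heq : (pth G hT r v).takeUntil u hu
        = (SimpleGraph.Walk.cons hadj.symm SimpleGraph.Walk.nil : G.Walk v u) := by
      rw [huniq.unique hq he]
    have hspec := (pth G hT r v).take_spec hu
    unfold par
    rw [← hspec, SimpleGraph.Walk.getVert_append, heq]
    simp [SimpleGraph.Walk.getVert_zero]
  · left
    have hW : (SimpleGraph.Walk.cons hadj (pth G hT r v)).IsPath :=
      (pth_isPath G hT r v).cons hu
    have := pth_unique G hT r _ hW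
    unfold par
    rw [← this, SimpleGraph.Walk.getVert_cons_succ, SimpleGraph.Walk.getVert_zero]

/-- children of a vertex -/
noncomputable def chl (u : V) : Finset V :=
  Finset.filter (fun c => c ≠ r ∧ par G hT r c = u) Finset.univ

lemma mem_chl_iff {u c : V} : c ∈ chl G hT r u ↔ c ≠ r ∧ par G hT r c = u := by
  unfold chl; rw [Finset.mem_filter]; simp

lemma chl_adj {u c : V} (hc : c ∈ chl G hT r u) : G.Adj u c := by
  rw [mem_chl_iff] at hc
  have := (par_spec G hT r hc.1).1
  rw [hc.2] at this; exact this.symm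

lemma adj_mem_chl {u c : V} (hadj : G.Adj u c) :
    c ∈ chl G hT r u ∨ (u ≠ r ∧ par G hT r u = c) := by
  rcases adj_par G hT r hadj.symm with hc | hc
  · left; rw [mem_chl_iff]
    refine ⟨?_, hc⟩
    rintro rfl
    rw [par_r] at hc
    exact hadj.ne hc.symm
  · right
    refine ⟨?_, hc⟩
    rintro rfl
    rw [par_r] at hc
    exact hadj.ne hc

lemma par_notMem_chl (u : V) : par G hT r u ∉ chl G hT r u := by
  intro hmem
  rw [mem_chl_iff] at hmem
  by_cases hu : u = r
  · subst hu; rw [par_r] at hmem; exact hmem.1 rfl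
  · have h1 := (par_spec G hT r hu).2
    have h2 := (par_spec G hT r hmem.1).2
    rw [hmem.2] at h2
    omega

lemma chl_subset_nbr (u : V) [DecidableRel G.Adj] : chl G hT r u ⊆ G.neighborFinset u := by
  intro c hc
  rw [SimpleGraph.mem_neighborFinset]
  exact chl_adj G hT r hc

lemma chl_card_le [DecidableRel G.Adj] (u : V) (hu : u ≠ r) :
    (chl G hT r u).card + 1 ≤ G.degree u := by
  classical
  have hsub : insert (par G hT r u) (chl G hT r u) ⊆ G.neighborFinset u := by
    intro c hc
    rw [Finset.mem_insert] at hc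
    rcases hc with rfl | hc
    · rw [SimpleGraph.mem_neighborFinset]; exact (par_spec G hT r hu).1
    · exact chl_subset_nbr G hT r u hc
  have := Finset.card_le_card hsub
  rw [Finset.card_insert_of_notMem (par_notMem_chl G hT r u)] at this
  rw [← SimpleGraph.card_neighborFinset_eq_degree]
  omega

lemma chl_card_le_root [DecidableRel G.Adj] (u : V) :
    (chl G hT r u).card ≤ G.degree u := by
  rw [← SimpleGraph.card_neighborFinset_eq_degree]
  exact Finset.card_le_card (chl_subset_nbr G hT r u)

end TreePart

section Construction
open SimpleGraph Finset

variable {V : Type} [Fintype V] [DecidableEq V] (G : SimpleGraph V) (hT : G.IsTree) (r : V)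
  (L D h : ℕ) (e : V → ℕ)

/-- index of a vertex among its siblings -/
noncomputable def idx (v : V) : ℕ :=
  ((chl G hT r (par G hT r v)).filter (fun c => e c < e v)).card

lemma idx_lt_card {v : V} (hv : v ≠ r) :
    idx G hT r e v < (chl G hT r (par G hT r v)).card := by
  have hvmem : v ∈ chl G hT r (par G hT r v) := (mem_chl_iff G hT r).mpr ⟨hv, rfl⟩
  have hsub : (chl G hT r (par G hT r v)).filter (fun c => e c < e v)
      ⊆ (chl G hT r (par G hT r v)).erase v := by
    intro c hc
    rw [Finset.mem_filter] at hc
    exact Finset.mem_erase.mpr ⟨fun hh => by subst hh; omega, hc.1⟩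
  have h1 := Finset.card_le_card hsub
  rw [Finset.card_erase_of_mem hvmem] at h1
  have h2 : 0 < (chl G hT r (par G hT r v)).card := Finset.card_pos.mpr ⟨v, hvmem⟩
  unfold idx
  omega

lemma idx_ne (he : Function.Injective e) {u c1 c2 : V} (h1 : c1 ∈ chl G hT r u)
    (h2 : c2 ∈ chl G hT r u) (hne : c1 ≠ c2) : idx G hT r e c1 ≠ idx G hT r e c2 := by
  have key : ∀ a b : V, a ∈ chl G hT r u → b ∈ chl G hT r u → e a < e b →
      idx G hT r e a < idx G hT r e b := by
    intro a b ha hb hab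
    have hpa : par G hT r a = u := ((mem_chl_iff G hT r).mp ha).2
    have hpb : par G hT r b = u := ((mem_chl_iff G hT r).mp hb).2
    unfold idx
    rw [hpa, hpb]
    apply Finset.card_lt_card
    constructor
    · intro c hc
      rw [Finset.mem_filter] at hc ⊢
      exact ⟨hc.1, by omega⟩
    · intro hsub
      have : a ∈ (chl G hT r u).filter (fun c => e c < e b) :=
        Finset.mem_filter.mpr ⟨ha, hab⟩
      have := hsub this
      rw [Finset.mem_filter] at this
      omega
  rcases Nat.lt_trichotomy (e c1) (e c2) with hlt | heq | hgt
  · exact Nat.ne_of_lt (key _ _ h1 h2 hlt)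
  · exact absurd (he heq) hne
  · exact (Nat.ne_of_lt (key _ _ h2 h1 hgt)).symm

/-- the construction step -/
def stp (p : ℕ × ℕ × ℕ) (i : ℕ) : ℕ × ℕ × ℕ :=
  let t := posm L p.2.1 p.2.2
  let s := if i < t then i else i + 1
  ((p.2.1 + s) % L, (p.2.1 + mkw L D h s (posm L p.2.1 p.1)) % L, p.1)

/-- the labelling, with fuel -/
noncomputable def FF : ℕ → V → ℕ × ℕ × ℕ
  | 0, _ => (0, h, 0)
  | n + 1, v => if v = r then (0, h, 0)
      else stp L D h (FF n (par G hT r v)) (idx G hT r e v)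

noncomputable def fc (v : V) : ℕ := (FF G hT r L D h e (dep G hT r v) v).1
noncomputable def bc (v : V) : ℕ := (FF G hT r L D h e (dep G hT r v) v).2.1
noncomputable def fpc (v : V) : ℕ := (FF G hT r L D h e (dep G hT r v) v).2.2

lemma FF_stab : ∀ n (v : V), dep G hT r v ≤ n →
    FF G hT r L D h e n v = FF G hT r L D h e (dep G hT r v) v := by
  intro n
  induction n with
  | zero => intro v hv; rw [Nat.le_zero.mp hv]
  | succ n ih =>
    intro v hv
    by_cases hvr : v = r
    · subst hvr
      rw [dep_r]
      simp [FF]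
    · have hd := (par_spec G hT r hvr).2
      have hdep : dep G hT r v = dep G hT r (par G hT r v) + 1 := by omega
      rw [hdep]
      show (if v = r then ((0:ℕ), h, (0:ℕ))
          else stp L D h (FF G hT r L D h e n (par G hT r v)) (idx G hT r e v)) = _
      rw [if_neg hvr]
      show _ = (if v = r then ((0:ℕ), h, (0:ℕ))
          else stp L D h (FF G hT r L D h e (dep G hT r (par G hT r v)) (par G hT r v))
            (idx G hT r e v))
      rw [if_neg hvr, ih (par G hT r v) (by omega)]

lemma FF_root : fc G hT r L D h e r = 0 ∧ bc G hT r L D h e r = h ∧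
    fpc G hT r L D h e r = 0 := by
  unfold fc bc fpc
  rw [dep_r]
  exact ⟨rfl, rfl, rfl⟩

lemma FF_unfold {v : V} (hv : v ≠ r) :
    FF G hT r L D h e (dep G hT r v) v
      = stp L D h (fc G hT r L D h e (par G hT r v), bc G hT r L D h e (par G hT r v),
          fpc G hT r L D h e (par G hT r v)) (idx G hT r e v) := by
  have hd := (par_spec G hT r hv).2
  have hdep : dep G hT r v = dep G hT r (par G hT r v) + 1 := by omega
  rw [hdep]
  show (if v = r then ((0:ℕ), h, (0:ℕ))
      else stp L D h (FF G hT r L D h e (dep G hT r (par G hT r v)) (par G hT r v))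
        (idx G hT r e v)) = _
  rw [if_neg hv]
  rfl

noncomputable def tOf (u : V) : ℕ := posm L (bc G hT r L D h e u) (fpc G hT r L D h e u)

noncomputable def sOf (v : V) : ℕ :=
  if idx G hT r e v < tOf G hT r L D h e (par G hT r v) then idx G hT r e v
  else idx G hT r e v + 1

lemma fc_eq {v : V} (hv : v ≠ r) :
    fc G hT r L D h e v
      = (bc G hT r L D h e (par G hT r v) + sOf G hT r L D h e v) % L ∧
    bc G hT r L D h e v
      = (bc G hT r L D h e (par G hT r v) +
          mkw L D h (sOf G hT r L D h e v)
            (posm L (bc G hT r L D h e (par G hT r v)) (fc G hT r L D h e (par G hT r v)))) % L ∧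
    fpc G hT r L D h e v = fc G hT r L D h e (par G hT r v) := by
  have huf := FF_unfold G hT r L D h e hv
  unfold fc bc fpc
  rw [huf]
  exact ⟨rfl, rfl, rfl⟩

end Construction

section Invariant
open SimpleGraph Finset

variable {V : Type} [Fintype V] [DecidableEq V] (G : SimpleGraph V) [DecidableRel G.Adj]
  (hT : G.IsTree) (r : V) (L D h : ℕ) (e : V → ℕ)

theorem tOf_root (hh : 1 ≤ h) (hD : 3 ≤ D) (hL1 : h + 2 * D - 1 ≤ L)
    (hL2 : 2 * h + D - 1 ≤ L) : D ≤ tOf G hT r L D h e r := by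
  obtain ⟨hfr, hbr, hpr⟩ := FF_root G hT r L D h e
  unfold tOf
  rw [hbr, hpr]
  exact (root_works hh hD hL1 hL2).2.2

theorem sOf_lt (hh : 1 ≤ h) (hD : 3 ≤ D) (hL1 : h + 2 * D - 1 ≤ L) (hL2 : 2 * h + D - 1 ≤ L)
    (hdeg : ∀ v, G.degree v ≤ D) {v : V} (hv : v ≠ r) : sOf G hT r L D h e v < D := by
  have hidx := idx_lt_card G hT r e hv
  by_cases hu : par G hT r v = r
  · have ht := tOf_root G hT r L D h e hh hD hL1 hL2
    have hcard := chl_card_le_root G hT r (par G hT r v)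
    have hdg := hdeg (par G hT r v)
    rw [hu] at hcard hdg hidx
    unfold sOf
    rw [hu]
    split_ifs with hc <;> omega
  · have hcard := chl_card_le G hT r (par G hT r v) hu
    have hdg := hdeg (par G hT r v)
    unfold sOf
    split_ifs with hc <;> omega

theorem main_inv (hh : 1 ≤ h) (hD : 3 ≤ D) (hL1 : h + 2 * D - 1 ≤ L) (hL2 : 2 * h + D - 1 ≤ L)
    (hdeg : ∀ v, G.degree v ≤ D) : ∀ v : V,
    (fc G hT r L D h e v < L ∧ bc G hT r L D h e v < L) ∧
    (∀ i < D, h ≤ natCyc L (fc G hT r L D h e v) ((bc G hT r L D h e v + i) % L)) ∧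
    (v ≠ r → posm L (bc G hT r L D h e (par G hT r v)) (fc G hT r L D h e v)
        = sOf G hT r L D h e v ∧
      posm L (bc G hT r L D h e v) (fc G hT r L D h e (par G hT r v)) < D ∧
      ∀ x < L, ¬(posm L (bc G hT r L D h e (par G hT r v)) x < D ∧
        posm L (bc G hT r L D h e v) x < D)) := by
  have main : ∀ n, ∀ v : V, dep G hT r v = n →
      (fc G hT r L D h e v < L ∧ bc G hT r L D h e v < L) ∧
      (∀ i < D, h ≤ natCyc L (fc G hT r L D h e v) ((bc G hT r L D h e v + i) % L)) ∧
      (v ≠ r → posm L (bc G hT r L D h e (par G hT r v)) (fc G hT r L D h e v)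
          = sOf G hT r L D h e v ∧
        posm L (bc G hT r L D h e v) (fc G hT r L D h e (par G hT r v)) < D ∧
        ∀ x < L, ¬(posm L (bc G hT r L D h e (par G hT r v)) x < D ∧
          posm L (bc G hT r L D h e v) x < D)) := by
    intro n
    induction n using Nat.strong_induction_on with
    | _ n ih =>
      intro v hn
      by_cases hv : v = r
      · rw [hv]
        obtain ⟨hfr, hbr, hpr⟩ := FF_root G hT r L D h e
        rw [hfr, hbr]
        obtain ⟨⟨hL0, hhL⟩, hroot, _⟩ := root_works hh hD hL1 hL2
        exact ⟨⟨by omega, by omega⟩, hroot, fun hc => absurd rfl hc⟩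
      · have hd := (par_spec G hT r hv).2
        have IHu := ih (dep G hT r (par G hT r v)) (by omega) (par G hT r v) rfl
        obtain ⟨⟨hfu, hbu⟩, hIu, _⟩ := IHu
        have hsv := sOf_lt G hT r L D h e hh hD hL1 hL2 hdeg hv
        obtain ⟨hfe, hbe, hpe⟩ := fc_eq G hT r L D h e hv
        have hstep := step_works hh hD hL1 hL2 hbu hfu hIu hsv
          (mkw L D h (sOf G hT r L D h e v)
            (posm L (bc G hT r L D h e (par G hT r v)) (fc G hT r L D h e (par G hT r v)))) rfl
        rw [← hfe, ← hbe] at hstep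
        exact ⟨hstep.1, hstep.2.1,
          fun _ => ⟨hstep.2.2.2.1, hstep.2.2.1, hstep.2.2.2.2⟩⟩
  exact fun v => main _ v rfl

end Invariant

lemma natCyc_pos {L a b : ℕ} (ha : a < L) (hb : b < L) (hne : a ≠ b) : 1 ≤ natCyc L a b := by
  have h1 : posm L b a ≠ 0 := by
    intro hz
    have := posm_recover hb ha
    rw [hz, Nat.add_zero, Nat.mod_eq_of_lt hb] at this
    exact hne this
  have h2 : posm L a b ≠ 0 := by
    intro hz
    have := posm_recover ha hb
    rw [hz, Nat.add_zero, Nat.mod_eq_of_lt ha] at this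
    exact hne this.symm
  unfold natCyc
  omega

section Derived
open SimpleGraph Finset

variable {V : Type} [Fintype V] [DecidableEq V] (G : SimpleGraph V) [DecidableRel G.Adj]
  (hT : G.IsTree) (r : V) (L D h : ℕ) (e : V → ℕ)
  (hh : 1 ≤ h) (hD : 3 ≤ D) (hL1 : h + 2 * D - 1 ≤ L) (hL2 : 2 * h + D - 1 ≤ L)
  (hdeg : ∀ v, G.degree v ≤ D) (he : Function.Injective e)

include hh hD hL1 hL2 hdeg

lemma tOf_eq {x : V} (hx : x ≠ r) :
    posm L (bc G hT r L D h e x) (fc G hT r L D h e (par G hT r x)) = tOf G hT r L D h e x := by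
  have h3 := (fc_eq G hT r L D h e hx).2.2
  unfold tOf
  rw [h3]

lemma adj_label_mem {a x : V} (hadj : G.Adj x a) :
    posm L (bc G hT r L D h e x) (fc G hT r L D h e a) < D := by
  rcases adj_mem_chl G hT r hadj with hmem | ⟨hxr, hpar⟩
  · obtain ⟨har, hpa⟩ := (mem_chl_iff G hT r).mp hmem
    have h3 := (main_inv G hT r L D h e hh hD hL1 hL2 hdeg a).2.2 har
    rw [hpa] at h3
    rw [h3.1]
    exact sOf_lt G hT r L D h e hh hD hL1 hL2 hdeg har
  · have h3 := (main_inv G hT r L D h e hh hD hL1 hL2 hdeg x).2.2 hxr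
    rw [hpar] at h3
    exact h3.2.1

lemma adj_far {x a : V} (hadj : G.Adj x a) :
    h ≤ natCyc L (fc G hT r L D h e x) (fc G hT r L D h e a) := by
  have hinvx := main_inv G hT r L D h e hh hD hL1 hL2 hdeg x
  have hinva := main_inv G hT r L D h e hh hD hL1 hL2 hdeg a
  rcases adj_mem_chl G hT r hadj with hmem | ⟨hxr, hpar⟩
  · obtain ⟨har, hpa⟩ := (mem_chl_iff G hT r).mp hmem
    have h3 := hinva.2.2 har
    rw [hpa] at h3
    have hrec : fc G hT r L D h e a
        = (bc G hT r L D h e x + posm L (bc G hT r L D h e x) (fc G hT r L D h e a)) % L :=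
      posm_recover hinvx.1.2 hinva.1.1
    have hlt : posm L (bc G hT r L D h e x) (fc G hT r L D h e a) < D := by
      rw [h3.1]; exact sOf_lt G hT r L D h e hh hD hL1 hL2 hdeg har
    have := hinvx.2.1 _ hlt
    rwa [← hrec] at this
  · have h3 := hinvx.2.2 hxr
    rw [hpar] at h3
    have hrec : fc G hT r L D h e x
        = (bc G hT r L D h e a + posm L (bc G hT r L D h e a) (fc G hT r L D h e x)) % L :=
      posm_recover hinva.1.2 hinvx.1.1
    have hlt : posm L (bc G hT r L D h e a) (fc G hT r L D h e x) < D := by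
      rw [← hpar] at h3 ⊢
      rw [h3.1]; exact sOf_lt G hT r L D h e hh hD hL1 hL2 hdeg hxr
    have := hinva.2.1 _ hlt
    rw [← hrec] at this
    rw [natCyc_comm]
    exact this

include he in
lemma nbr_labels_ne {x a b : V} (ha : G.Adj x a) (hb : G.Adj x b) (hne : a ≠ b) :
    fc G hT r L D h e a ≠ fc G hT r L D h e b := by
  have hinv := main_inv G hT r L D h e hh hD hL1 hL2 hdeg
  -- it suffices to distinguish positions in x's interval
  suffices hp : posm L (bc G hT r L D h e x) (fc G hT r L D h e a)
      ≠ posm L (bc G hT r L D h e x) (fc G hT r L D h e b) by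
    intro hfe; rw [hfe] at hp; exact hp rfl
  have hsOf : ∀ c ∈ chl G hT r x, posm L (bc G hT r L D h e x) (fc G hT r L D h e c)
      = sOf G hT r L D h e c := by
    intro c hc
    obtain ⟨hcr, hpc⟩ := (mem_chl_iff G hT r).mp hc
    have := (hinv c).2.2 hcr
    rw [hpc] at this
    exact this.1
  rcases adj_mem_chl G hT r ha with hma | ⟨hxr, hpa⟩ <;>
    rcases adj_mem_chl G hT r hb with hmb | ⟨hxr', hpb⟩
  · -- both children: distinct slots
    rw [hsOf a hma, hsOf b hmb]
    have hia := idx_ne G hT r e he hma hmb hne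
    have hpa := ((mem_chl_iff G hT r).mp hma).2
    have hpb := ((mem_chl_iff G hT r).mp hmb).2
    unfold sOf
    rw [hpa, hpb]
    split_ifs <;> omega
  · -- a child, b parent
    rw [hsOf a hma, ← hpb, tOf_eq G hT r L D h e hh hD hL1 hL2 hdeg hxr']
    have hpa := ((mem_chl_iff G hT r).mp hma).2
    unfold sOf
    rw [hpa]
    split_ifs <;> omega
  · -- a parent, b child
    rw [hsOf b hmb, ← hpa, tOf_eq G hT r L D h e hh hD hL1 hL2 hdeg hxr]
    have hpb := ((mem_chl_iff G hT r).mp hmb).2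
    unfold sOf
    rw [hpb]
    split_ifs <;> omega
  · exact absurd (hpa.symm.trans hpb) hne

lemma adj_disj {x y : V} (hadj : G.Adj x y) :
    ∀ w < L, ¬(posm L (bc G hT r L D h e x) w < D ∧ posm L (bc G hT r L D h e y) w < D) := by
  have hinv := main_inv G hT r L D h e hh hD hL1 hL2 hdeg
  rcases adj_par G hT r hadj with hp | hp
  · -- par x = y
    have hxr : x ≠ r := by
      intro hc; subst hc; rw [par_r] at hp; exact hadj.ne' hp.symm
    have := (hinv x).2.2 hxr
    rw [hp] at this
    intro w hw hcon
    exact this.2.2 w hw ⟨hcon.2, hcon.1⟩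
  · -- par y = x
    have hyr : y ≠ r := by
      intro hc; subst hc; rw [par_r] at hp; exact hadj.ne' hp
    have := (hinv y).2.2 hyr
    rw [hp] at this
    intro w hw hcon
    exact this.2.2 w hw hcon

end Derived

section DistDecomp
open SimpleGraph

variable {V : Type} {G : SimpleGraph V} {u v : V}

lemma dist_two (hd : G.dist u v = 2) : ∃ x, G.Adj u x ∧ G.Adj x v := by
  have hr : G.Reachable u v := SimpleGraph.Reachable.of_dist_ne_zero (by omega)
  obtain ⟨p, hp⟩ := hr.exists_walk_length_eq_dist
  rw [hd] at hp
  cases p with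
  | nil => simp at hp
  | cons h1 q =>
    cases q with
    | nil => simp at hp
    | cons h2 q2 =>
      cases q2 with
      | nil => exact ⟨_, h1, h2⟩
      | cons h3 q3 => simp [SimpleGraph.Walk.length_cons] at hp

lemma dist_three (hd : G.dist u v = 3) : ∃ x y, G.Adj u x ∧ G.Adj x y ∧ G.Adj y v := by
  have hr : G.Reachable u v := SimpleGraph.Reachable.of_dist_ne_zero (by omega)
  obtain ⟨p, hp⟩ := hr.exists_walk_length_eq_dist
  rw [hd] at hp
  cases p with
  | nil => simp at hp
  | cons h1 q =>
    cases q with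
    | nil => simp at hp
    | cons h2 q2 =>
      cases q2 with
      | nil => simp at hp
      | cons h3 q3 =>
        cases q3 with
        | nil => exact ⟨_, _, h1, h2, h3⟩
        | cons h4 q4 => simp [SimpleGraph.Walk.length_cons] at hp

end DistDecomp

section Main
open SimpleGraph Finset

theorem exists_elegant {V : Type} [Fintype V] (G : SimpleGraph V) [DecidableRel G.Adj]
    (hT : G.IsTree) (hD3 : 3 ≤ G.maxDegree) (h : ℕ) (hh : 1 ≤ h) :
    ∃ f : V → ℕ,
      IsElegantCLabelling G h 1 (max (h + 2 * G.maxDegree - 1) (2 * h + G.maxDegree - 1)) f := by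
  classical
  have hne : Nonempty V := hT.isConnected.nonempty
  set D := G.maxDegree with hDdef
  set L := max (h + 2 * D - 1) (2 * h + D - 1) with hLdef
  have hL1 : h + 2 * D - 1 ≤ L := le_max_left _ _
  have hL2 : 2 * h + D - 1 ≤ L := le_max_right _ _
  have hD : 3 ≤ D := hD3
  have hL0 : 0 < L := by omega
  haveI : NeZero L := ⟨by omega⟩
  obtain ⟨r⟩ := hne
  set e : V → ℕ := fun v => ((Fintype.equivFin V) v : ℕ) with hedef
  have he : Function.Injective e := by
    intro a b hab
    exact (Fintype.equivFin V).injective (Fin.val_injective hab)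
  have hdeg : ∀ v, G.degree v ≤ D := fun v => G.degree_le_maxDegree v
  set f : V → ℕ := fc G hT r L D h e with hfdef
  have hinv := main_inv G hT r L D h e hh hD hL1 hL2 hdeg
  have hflt : ∀ v, f v < L := fun v => (hinv v).1.1
  have hblt : ∀ v, bc G hT r L D h e v < L := fun v => (hinv v).1.2
  -- distinct labels for vertices with a common neighbour
  have hne2 : ∀ {x a b : V}, G.Adj x a → G.Adj x b → a ≠ b → f a ≠ f b :=
    fun ha hb hab => nbr_labels_ne G hT r L D h e hh hD hL1 hL2 hdeg he ha hb hab
  -- distinct labels for vertices at distance 3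
  have hne3 : ∀ {a x y b : V}, G.Adj a x → G.Adj x y → G.Adj y b → f a ≠ f b := by
    intro a x y b hax hxy hyb hfe
    have h1 : posm L (bc G hT r L D h e x) (f a) < D :=
      adj_label_mem G hT r L D h e hh hD hL1 hL2 hdeg hax.symm
    have h2 : posm L (bc G hT r L D h e y) (f b) < D :=
      adj_label_mem G hT r L D h e hh hD hL1 hL2 hdeg hyb
    rw [← hfe] at h2
    exact adj_disj G hT r L D h e hh hD hL1 hL2 hdeg hxy (f a) (hflt a) ⟨h1, h2⟩
  have hCL : IsCLabelling G h 1 L f := by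
    refine ⟨hflt, ?_, ?_⟩
    · intro u v hd
      have hadj : G.Adj u v := SimpleGraph.dist_eq_one_iff_adj.mp hd
      have := adj_far G hT r L D h e hh hD hL1 hL2 hdeg hadj
      unfold cycDist
      rw [cycDist_eq_natCyc (hflt u) (hflt v)]
      exact_mod_cast this
    · intro u v hd
      have huv : f u ≠ f v := by
        rcases hd with hd | hd
        · obtain ⟨x, h1, h2⟩ := dist_two hd
          exact hne2 h1.symm h2 (by intro hc; subst hc; simp [SimpleGraph.dist_self] at hd)
        · obtain ⟨x, y, h1, h2, h3⟩ := dist_three hd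
          exact hne3 h1 h2 h3
      have := natCyc_pos (hflt u) (hflt v) huv
      unfold cycDist
      rw [cycDist_eq_natCyc (hflt u) (hflt v)]
      exact_mod_cast this
  refine ⟨f, hCL, fun u => {x : ZMod L | ∃ i : ℕ, i ≤ D - 1 ∧ x = (bc G hT r L D h e u : ZMod L) + i}, ?_, ?_, ?_⟩
  · intro u
    exact ⟨(bc G hT r L D h e u : ZMod L), D - 1, rfl⟩
  · intro u w hadj
    set i := posm L (bc G hT r L D h e u) (f w) with hidef
    have hi : i < D :=
      adj_label_mem G hT r L D h e hh hD hL1 hL2 hdeg hadj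
    refine ⟨i, by omega, ?_⟩
    have hrec : f w = (bc G hT r L D h e u + i) % L :=
      posm_recover (hblt u) (hflt w)
    rw [hrec, ZMod.natCast_mod]
    push_cast
    ring
  · intro u v hadj
    ext x
    simp only [Set.mem_inter_iff, Set.mem_setOf_eq, Set.mem_empty_iff_false, iff_false]
    rintro ⟨⟨i, hi, hxi⟩, ⟨j, hj, hxj⟩⟩
    set y := (bc G hT r L D h e u + i) % L with hydef
    have hylt : y < L := Nat.mod_lt _ hL0
    have hiD : i < D := by omega
    have hjD : j < D := by omega
    have hpy : posm L (bc G hT r L D h e u) y = i := posm_add (hblt u) (by omega)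
    have hyv : y = (bc G hT r L D h e v + j) % L := by
      have hcast : ((y : ℕ) : ZMod L) = (((bc G hT r L D h e v + j) % L : ℕ) : ZMod L) := by
        rw [hydef, ZMod.natCast_mod, ZMod.natCast_mod]
        push_cast
        rw [← hxi, ← hxj]
      have hv1 : ((y : ℕ) : ZMod L).val = y := ZMod.val_cast_of_lt hylt
      have hv2 : (((bc G hT r L D h e v + j) % L : ℕ) : ZMod L).val
          = (bc G hT r L D h e v + j) % L := ZMod.val_cast_of_lt (Nat.mod_lt _ hL0)
      rw [← hv1, ← hv2, hcast]
    have hpy2 : posm L (bc G hT r L D h e v) y = j := by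
      rw [hyv]; exact posm_add (hblt v) (by omega)
    exact adj_disj G hT r L D h e hh hD hL1 hL2 hdeg hadj y hylt (by rw [hpy, hpy2]; exact ⟨hiD, hjD⟩)

end Main

lemma posm_add' {L b : ℕ} (s : ℕ) (hb : b < L) (hL : 0 < L) :
    posm L b ((b + s) % L) = s % L := by
  have he : (b + s) % L = (b + s % L) % L := by
    conv_lhs => rw [Nat.add_mod, Nat.mod_eq_of_lt hb]
  rw [he]
  exact posm_add hb (Nat.mod_lt _ hL)

lemma posm_sum {L a b : ℕ} (ha : a < L) (hb : b < L) (hne : a ≠ b) :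
    posm L a b + posm L b a = L := by
  rw [posm_spec ha hb, posm_spec hb ha]
  split_ifs <;> omega
section Lower
open SimpleGraph Finset

variable {V : Type} [Fintype V] (G : SimpleGraph V) [DecidableRel G.Adj]

lemma cycDist_self (ℓ a : ℕ) : cycDist ℓ a a = 0 := by
  unfold cycDist
  simp

lemma tree_no_common_adj (hT : G.IsTree) {x u y : V} (hxu : G.Adj x u) (huy : G.Adj u y)
    (hxy : x ≠ y) : ¬ G.Adj x y := by
  intro hadj
  have hp1 : (SimpleGraph.Walk.cons hadj SimpleGraph.Walk.nil : G.Walk x y).IsPath := by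
    simp [SimpleGraph.Walk.cons_isPath_iff, hxy]
  have hp2 : (SimpleGraph.Walk.cons hxu (SimpleGraph.Walk.cons huy SimpleGraph.Walk.nil)
      : G.Walk x y).IsPath := by
    simp [SimpleGraph.Walk.cons_isPath_iff, hxu.ne, huy.ne, hxy]
  have := ((hT.existsUnique_path x y).unique hp1 hp2)
  have hlen := congrArg SimpleGraph.Walk.length this
  simp at hlen

lemma tree_dist_two (hT : G.IsTree) {x u y : V} (hxu : G.Adj u x) (huy : G.Adj u y)
    (hxy : x ≠ y) : G.dist x y = 2 := by
  have hle : G.dist x y ≤ 2 :=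
    SimpleGraph.dist_le (SimpleGraph.Walk.cons hxu.symm (SimpleGraph.Walk.cons huy
      SimpleGraph.Walk.nil))
  have hne1 : G.dist x y ≠ 1 := by
    intro hc
    exact tree_no_common_adj G hT hxu.symm huy hxy (SimpleGraph.dist_eq_one_iff_adj.mp hc)
  have hpos : 0 < G.dist x y := hT.isConnected.pos_dist_of_ne hxy
  omega

variable {h ℓ : ℕ} {f : V → ℕ}

lemma label_ne_of_dist (hh : 1 ≤ h) (hf : IsCLabelling G h 1 ℓ f) {x y : V}
    (h1 : 1 ≤ G.dist x y) (h3 : G.dist x y ≤ 3) : f x ≠ f y := by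
  intro heq
  interval_cases hd : G.dist x y
  · have := hf.2.1 x y hd
    rw [heq, cycDist_self] at this
    have h0 : (h : ℤ) ≤ 0 := this
    omega
  · have := hf.2.2 x y (Or.inl hd)
    rw [heq, cycDist_self] at this
    omega
  · have := hf.2.2 x y (Or.inr hd)
    rw [heq, cycDist_self] at this
    omega

lemma natCyc_le_of_dist1 (hf : IsCLabelling G h 1 ℓ f) {x y : V} (hd : G.dist x y = 1) :
    h ≤ natCyc ℓ (f x) (f y) := by
  have := hf.2.1 x y hd
  unfold cycDist at this
  rw [cycDist_eq_natCyc (hf.1 x) (hf.1 y)] at this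
  exact_mod_cast this

/-- first lower bound : `2h + Δ - 1 ≤ ℓ` -/
theorem lower_bound_one (hT : G.IsTree) (hD3 : 3 ≤ G.maxDegree) (hh : 1 ≤ h)
    (hl0 : 0 < ℓ) (hf : IsCLabelling G h 1 ℓ f) : 2 * h + G.maxDegree - 1 ≤ ℓ := by
  haveI : Nonempty V := hT.isConnected.nonempty
  obtain ⟨u, hu⟩ := G.exists_maximal_degree_vertex
  have hdegu : 0 < G.degree u := by omega
  obtain ⟨x0, hx0⟩ := (G.degree_pos_iff_exists_adj u).mp hdegu
  have hflu : f u < ℓ := hf.1 u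
  -- ℓ ≥ 2h
  have hl2h : 2 * h ≤ ℓ := by
    have hd1 : G.dist u x0 = 1 := SimpleGraph.dist_eq_one_iff_adj.mpr hx0
    have := hf.2.1 u x0 hd1
    unfold cycDist at this
    rw [le_min_iff] at this
    omega
  -- neighbour labels
  have hinj : Set.InjOn f (G.neighborFinset u : Set V) := by
    intro x hx y hy hxy
    by_contra hne
    rw [Finset.mem_coe, SimpleGraph.mem_neighborFinset] at hx hy
    refine label_ne_of_dist G hh hf ?_ ?_ hxy <;>
      rw [tree_dist_two G hT hx hy hne] <;> omega
  set S1 : Finset ℕ := (G.neighborFinset u).image f with hS1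
  have hcard1 : S1.card = G.degree u := by
    rw [hS1, Finset.card_image_of_injOn hinj, SimpleGraph.card_neighborFinset_eq_degree]
  -- ball labels
  set c : ℕ := (f u + (ℓ - (h - 1))) % ℓ with hc
  have hclt : c < ℓ := Nat.mod_lt _ hl0
  set g : ℕ → ℕ := fun j => (c + j) % ℓ with hg
  set S2 : Finset ℕ := (Finset.range (2 * h - 1)).image g with hS2
  have hcard2 : S2.card = 2 * h - 1 := by
    rw [hS2, Finset.card_image_of_injOn, Finset.card_range]
    intro j1 hj1 j2 hj2 hj
    simp only [Finset.coe_range, Set.mem_Iio] at hj1 hj2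
    have e1 : posm ℓ c (g j1) = j1 := posm_add hclt (by omega)
    have e2 : posm ℓ c (g j2) = j2 := posm_add hclt (by omega)
    rw [← e1, ← e2, hj]
  -- S2 labels are close to f u
  have hS2close : ∀ y ∈ S2, natCyc ℓ (f u) y ≤ h - 1 := by
    intro y hy
    rw [hS2] at hy
    obtain ⟨j, hj, hyj⟩ := Finset.mem_image.mp hy
    rw [Finset.mem_range] at hj
    set k : ℕ := (ℓ - (h - 1)) + j with hk
    have hyy : y = (f u + k) % ℓ := by
      rw [← hyj, hg, hc]
      simp only [Nat.mod_add_mod]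
      rw [Nat.add_assoc]
    by_cases hyu : y = f u
    · rw [hyu, natCyc_self hflu]; omega
    have hylt : y < ℓ := by rw [hyy]; exact Nat.mod_lt _ hl0
    have hpfy : posm ℓ (f u) y = k % ℓ := by rw [hyy]; exact posm_add' k hflu hl0
    have hsum := posm_sum hflu hylt (fun hcc => hyu hcc.symm)
    unfold natCyc
    rcases Nat.lt_or_ge k ℓ with hcs | hcs
    · have hkm : k % ℓ = k := Nat.mod_eq_of_lt hcs
      omega
    · have hkm : k % ℓ = k - ℓ := by
        rw [Nat.mod_eq_sub_mod hcs, Nat.mod_eq_of_lt (by omega)]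
      omega
  -- disjointness and counting
  have hdisj : Disjoint S1 S2 := by
    rw [Finset.disjoint_left]
    intro y hy1 hy2
    have hclose := hS2close y hy2
    rw [hS1] at hy1
    obtain ⟨x, hx, hyx⟩ := Finset.mem_image.mp hy1
    rw [SimpleGraph.mem_neighborFinset] at hx
    have hd1 : G.dist u x = 1 := SimpleGraph.dist_eq_one_iff_adj.mpr hx
    have := natCyc_le_of_dist1 G hf hd1
    rw [hyx] at this
    omega
  have hsub : S1 ∪ S2 ⊆ Finset.range ℓ := by
    intro y hy
    rw [Finset.mem_range]
    rcases Finset.mem_union.mp hy with hy | hy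
    · obtain ⟨x, _, hyx⟩ := Finset.mem_image.mp hy
      rw [← hyx]; exact hf.1 x
    · obtain ⟨j, _, hyj⟩ := Finset.mem_image.mp hy
      rw [← hyj]; exact Nat.mod_lt _ hl0
  have := Finset.card_le_card hsub
  rw [Finset.card_union_of_disjoint hdisj, Finset.card_range, hcard1, hcard2] at this
  omega

/-- second lower bound : `Δ₂ ≤ ℓ` -/
theorem lower_bound_two (hT : G.IsTree) (hD3 : 3 ≤ G.maxDegree) (hh : 1 ≤ h)
    (hl0 : 0 < ℓ) (hf : IsCLabelling G h 1 ℓ f) : deltaTwo G ≤ ℓ := by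
  classical
  haveI : Nonempty V := hT.isConnected.nonempty
  obtain ⟨u, hu⟩ := G.exists_maximal_degree_vertex
  have hdegu : 0 < G.degree u := by omega
  obtain ⟨x0, hx0⟩ := (G.degree_pos_iff_exists_adj u).mp hdegu
  set S : Set ℕ := {d : ℕ | ∃ a b : V, G.Adj a b ∧ d = G.degree a + G.degree b} with hSdef
  have hSne : S.Nonempty := ⟨_, u, x0, hx0, rfl⟩
  have hSbdd : BddAbove S := by
    refine ⟨2 * G.maxDegree, ?_⟩
    rintro d ⟨a, b, hab, rfl⟩
    have h1 := G.degree_le_maxDegree a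
    have h2 := G.degree_le_maxDegree b
    omega
  have hmem : sSup S ∈ S := Nat.sSup_mem hSne hSbdd
  obtain ⟨a, b, hab, hd⟩ := hmem
  have hdT : deltaTwo G = G.degree a + G.degree b := hd
  rw [hdT]
  -- neighbourhoods are disjoint
  have hdisjN : Disjoint (G.neighborFinset a) (G.neighborFinset b) := by
    rw [Finset.disjoint_left]
    intro z hz1 hz2
    rw [SimpleGraph.mem_neighborFinset] at hz1 hz2
    exact tree_no_common_adj G hT hz1 hz2.symm hab.ne hab
  set N : Finset V := G.neighborFinset a ∪ G.neighborFinset b with hN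
  have hNd : ∀ x ∈ N, ∀ y ∈ N, G.dist x y ≤ 3 := by
    intro x hx y hy
    rw [hN, Finset.mem_union] at hx hy
    rcases hx with hx | hx <;> rcases hy with hy | hy <;>
      rw [SimpleGraph.mem_neighborFinset] at hx hy
    · exact le_trans (SimpleGraph.dist_le
        (SimpleGraph.Walk.cons hx.symm (SimpleGraph.Walk.cons hy SimpleGraph.Walk.nil)))
        (by norm_num)
    · exact le_trans (SimpleGraph.dist_le (SimpleGraph.Walk.cons hx.symm
        (SimpleGraph.Walk.cons hab (SimpleGraph.Walk.cons hy SimpleGraph.Walk.nil))))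
        (by norm_num)
    · exact le_trans (SimpleGraph.dist_le (SimpleGraph.Walk.cons hx.symm
        (SimpleGraph.Walk.cons hab.symm (SimpleGraph.Walk.cons hy SimpleGraph.Walk.nil))))
        (by norm_num)
    · exact le_trans (SimpleGraph.dist_le
        (SimpleGraph.Walk.cons hx.symm (SimpleGraph.Walk.cons hy SimpleGraph.Walk.nil)))
        (by norm_num)
  have hinj : Set.InjOn f (N : Set V) := by
    intro x hx y hy hxy
    by_contra hne
    have h1 : 1 ≤ G.dist x y := hT.isConnected.pos_dist_of_ne hne
    exact label_ne_of_dist G hh hf h1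
      (hNd x (by exact_mod_cast hx) y (by exact_mod_cast hy)) hxy
  have hcard : N.card = G.degree a + G.degree b := by
    rw [hN, Finset.card_union_of_disjoint hdisjN,
      SimpleGraph.card_neighborFinset_eq_degree, SimpleGraph.card_neighborFinset_eq_degree]
  have hsub : N.image f ⊆ Finset.range ℓ := by
    intro y hy
    obtain ⟨x, _, hyx⟩ := Finset.mem_image.mp hy
    rw [Finset.mem_range, ← hyx]
    exact hf.1 x
  have := Finset.card_le_card hsub
  rw [Finset.card_image_of_injOn hinj, Finset.card_range, hcard] at this
  exact this

end Lower
end St18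
theorem stmt18 {V : Type} [Fintype V] (G : SimpleGraph V) [DecidableRel G.Adj]
    (hT : G.IsTree) (hdiam : ∃ u v : V, 3 ≤ G.dist u v) (hD : 3 ≤ G.maxDegree)
    (h : ℕ) (hh : 1 ≤ h) :
    max (deltaTwo G) (2 * h + G.maxDegree - 1) ≤ sigmaNum G h 1 ∧
    sigmaNum G h 1 ≤ sigmaStar G h 1 ∧
    sigmaStar G h 1 ≤ max (h + 2 * G.maxDegree - 1) (2 * h + G.maxDegree - 1) := by
  classical
  obtain ⟨fstar, hstar⟩ := St18.exists_elegant G hT hD h hh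
  set M := max (h + 2 * G.maxDegree - 1) (2 * h + G.maxDegree - 1) with hM
  have hM0 : 0 < M := by
    have h2 : 2 * h + G.maxDegree - 1 ≤ M := le_max_right _ _
    omega
  have hmemStar : M ∈ {ℓ : ℕ | 0 < ℓ ∧ ∃ f : V → ℕ, IsElegantCLabelling G h 1 ℓ f} :=
    ⟨hM0, fstar, hstar⟩
  have hstarle : sigmaStar G h 1 ≤ M := Nat.sInf_le hmemStar
  have hsNe : {ℓ : ℕ | 0 < ℓ ∧ ∃ f : V → ℕ, IsElegantCLabelling G h 1 ℓ f}.Nonempty :=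
    ⟨M, hmemStar⟩
  have hsmem : 0 < sigmaStar G h 1 ∧
      ∃ f : V → ℕ, IsElegantCLabelling G h 1 (sigmaStar G h 1) f := Nat.sInf_mem hsNe
  obtain ⟨hspos, fs, hfs⟩ := hsmem
  have hmemNum : sigmaStar G h 1 ∈ {ℓ : ℕ | 0 < ℓ ∧ ∃ f : V → ℕ, IsCLabelling G h 1 ℓ f} :=
    ⟨hspos, fs, hfs.1⟩
  have hnumle : sigmaNum G h 1 ≤ sigmaStar G h 1 := Nat.sInf_le hmemNum
  have hnNe : {ℓ : ℕ | 0 < ℓ ∧ ∃ f : V → ℕ, IsCLabelling G h 1 ℓ f}.Nonempty :=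
    ⟨_, hmemNum⟩
  have hnmem : 0 < sigmaNum G h 1 ∧
      ∃ f : V → ℕ, IsCLabelling G h 1 (sigmaNum G h 1) f := Nat.sInf_mem hnNe
  obtain ⟨hnpos, fn, hfn⟩ := hnmem
  exact ⟨max_le (St18.lower_bound_two G hT hD hh hnpos hfn)
    (St18.lower_bound_one G hT hD hh hnpos hfn), hnumle, hstarle⟩
end

section
/- Let T be a finite tree with diameter at least 3 and maximum degree Δ ≥ 3, and let h be an integer with 1 ≤ h ≤ Δ. If T contains T̂_{Δ−1,2} as a subtree (equivalently, T has a vertex of degree Δ all of whose neighbours have degree Δ), then σ_{h,1,1}(T) = σ*_{h,1,1}(T) = h + 2Δ − 1. -/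
/-!
Lower bound: let `r` have degree `Δ` with all neighbours of degree `Δ`, and let `w` be the
neighbour of `r` whose label comes first after `f r` going round the cycle. The labels of `r`, of
the other `Δ - 1` neighbours of `w` and of the neighbours of `r` whose labels lie at least `h`
beyond `f w` are pairwise distinct and at cyclic distance at least `h` from `f w`, so there are at
most `ℓ + 1 - 2h` of them. The remaining neighbours of `r` have labels strictly between `f w` and
`f w + h`, so there are at most `h - 1` of them. Together, `h + 2Δ - 1 ≤ ℓ`.

Upper bound: with `L = h + 2Δ - 1`, root the tree and give every vertex `u` a window of `Δ`
consecutive residues starting `k u ∈ [h, Δ]` after its label, in which the labels of all its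
neighbours occupy distinct slots. A child at slot `s` of its parent's window gets
`k = max (Δ - s) h`, which keeps its window disjoint from its parent's while leaving room for the
parent's label. Distinct slots separate labels at distance 2, disjoint windows of adjacent vertices
separate labels at distance 3, and `h ≤ k u ≤ Δ` gives cyclic distance at least `h` along edges.
-/

open SimpleGraph

theorem val_natCast_sub_natCast {ℓ a b : ℕ} (ha : a < ℓ) :
    ((b : ZMod ℓ) - a).val = (b + ℓ - a) % ℓ := by
  have hcast : (b : ZMod ℓ) - a = ((b + ℓ - a : ℕ) : ZMod ℓ) := by
    rw [Nat.cast_sub (by omega)]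
    push_cast
    rw [ZMod.natCast_self, add_zero]
  rw [hcast, ZMod.val_natCast]

theorem le_cycDist_iff {ℓ a b h : ℕ} (ha : a < ℓ) (hb : b < ℓ) :
    (h : ℤ) ≤ cycDist ℓ a b ↔ h ≤ ((b : ZMod ℓ) - a).val ∧ ((b : ZMod ℓ) - a).val + h ≤ ℓ := by
  rw [val_natCast_sub_natCast ha, cycDist, le_min_iff]
  rcases le_total a b with hab | hab
  · rw [abs_of_nonpos (by omega), show b + ℓ - a = (b - a) + ℓ by omega, Nat.add_mod_right,
      Nat.mod_eq_of_lt (by omega)]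
    omega
  · rw [abs_of_nonneg (by omega)]
    rcases eq_or_lt_of_le hab with rfl | hlt
    · simp only [sub_self, Nat.add_sub_cancel_left, Nat.mod_self]
      omega
    · rw [Nat.mod_eq_of_lt (by omega)]
      omega

theorem one_le_cycDist_iff {ℓ a b : ℕ} (ha : a < ℓ) (hb : b < ℓ) :
    (1 : ℤ) ≤ cycDist ℓ a b ↔ a ≠ b := by
  rw [cycDist, le_min_iff]
  rcases le_total a b with hab | hab
  · rw [abs_of_nonpos (by omega)]
    omega
  · rw [abs_of_nonneg (by omega)]
    omega

theorem eq_of_val_natCast_sub_eq {ℓ a b c : ℕ} (ha : a < ℓ) (hb : b < ℓ)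
    (hab : ((a : ZMod ℓ) - c).val = ((b : ZMod ℓ) - c).val) : a = b := by
  have : NeZero ℓ := ⟨by omega⟩
  have hcast := sub_left_inj.mp (ZMod.val_injective ℓ hab)
  rwa [ZMod.natCast_eq_natCast_iff', Nat.mod_eq_of_lt ha, Nat.mod_eq_of_lt hb] at hcast

theorem card_le_of_val_natCast_sub_mem {ℓ c : ℕ} {S T : Finset ℕ} (hS : ∀ a ∈ S, a < ℓ)
    (hT : ∀ a ∈ S, ((a : ZMod ℓ) - c).val ∈ T) : S.card ≤ T.card :=
  Finset.card_le_card_of_injOn (fun a => ((a : ZMod ℓ) - c).val) hT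
    fun _ ha _ hb hab => eq_of_val_natCast_sub_eq (hS _ ha) (hS _ hb) hab

theorem card_add_two_mul_le_of_le_cycDist {ℓ c h : ℕ} {S : Finset ℕ} (hc : c < ℓ)
    (hS : ∀ a ∈ S, a < ℓ ∧ (h : ℤ) ≤ cycDist ℓ c a) : S.card ≤ ℓ + 1 - 2 * h := by
  have hcard := card_le_of_val_natCast_sub_mem (c := c) (T := Finset.Icc h (ℓ - h))
    (fun a ha => (hS a ha).1) fun a ha => by
      have := (le_cycDist_iff hc (hS a ha).1).mp (hS a ha).2
      rw [Finset.mem_Icc]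
      omega
  rw [Nat.card_Icc] at hcard
  omega

namespace SimpleGraph

variable {V : Type*} {G : SimpleGraph V}

theorem IsAcyclic.dist_eq_length (hA : G.IsAcyclic) {u v : V} {p : G.Walk u v}
    (hp : p.IsPath) : G.dist u v = p.length := by
  obtain ⟨q, hq, hql⟩ := p.reachable.exists_path_of_dist
  have hpq : (⟨p, hp⟩ : G.Path u v) = ⟨q, hq⟩ := (hA.subsingleton_path u v).elim _ _
  rw [← hql, Subtype.mk.inj hpq]

theorem IsAcyclic.dist_eq_two (hA : G.IsAcyclic) {m u v : V} (hu : G.Adj m u) (hv : G.Adj m v)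
    (huv : u ≠ v) : G.dist u v = 2 := by
  have hp : (Walk.cons hu.symm (Walk.cons hv Walk.nil)).IsPath := by
    simp [Walk.isPath_def, hu.ne', hv.ne, huv]
  simpa using hA.dist_eq_length hp

theorem IsAcyclic.dist_eq_three (hA : G.IsAcyclic) {a b c d : V} (hab : G.Adj a b)
    (hbc : G.Adj b c) (hcd : G.Adj c d) (hac : a ≠ c) (hbd : b ≠ d) : G.dist a d = 3 := by
  have hp : (Walk.cons hab (Walk.cons hbc (Walk.cons hcd Walk.nil))).IsPath := by
    rw [hA.isPath_iff_isChain]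
    simp [hac, hbd, hab.ne, hbc.ne, hcd.ne]
  simpa using hA.dist_eq_length hp

theorem exists_adj_adj_of_dist_eq_two {u v : V} (hd : G.dist u v = 2) :
    ∃ m, G.Adj u m ∧ G.Adj m v := by
  have hr : G.Reachable u v := Reachable.of_dist_ne_zero (by omega)
  obtain ⟨p, hp⟩ := hr.exists_walk_length_eq_dist
  rw [hd] at hp
  rcases p with _ | ⟨h₁, _ | ⟨h₂, _ | ⟨_, _⟩⟩⟩ <;> simp at hp
  exact ⟨_, h₁, h₂⟩

theorem exists_adj_adj_adj_of_dist_eq_three {u v : V} (hd : G.dist u v = 3) :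
    ∃ x y, G.Adj u x ∧ G.Adj x y ∧ G.Adj y v := by
  have hr : G.Reachable u v := Reachable.of_dist_ne_zero (by omega)
  obtain ⟨p, hp⟩ := hr.exists_walk_length_eq_dist
  rw [hd] at hp
  rcases p with _ | ⟨h₁, _ | ⟨h₂, _ | ⟨h₃, _ | ⟨_, _⟩⟩⟩⟩ <;> simp at hp
  exact ⟨_, _, h₁, h₂, h₃⟩

theorem Reachable.exists_adj_dist_eq_add_one {r u : V} (hr : G.Reachable r u) (hu : u ≠ r) :
    ∃ w, G.Adj w u ∧ G.dist r u = G.dist r w + 1 := by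
  obtain ⟨p, hp⟩ := hr.symm.exists_walk_length_eq_dist
  have hnil : ¬p.Nil := Walk.not_nil_of_ne hu
  refine ⟨p.snd, (p.adj_snd hnil).symm, le_antisymm ?_ ?_⟩
  · have := (hr.trans (p.adj_snd hnil).reachable).dist_triangle_left u
    rwa [dist_eq_one_iff_adj.mpr (p.adj_snd hnil).symm] at this
  · have := dist_le p.tail
    rw [dist_comm, G.dist_comm (u := r), ← hp, ← p.length_tail_add_one hnil]
    omega

theorem IsAcyclic.eq_of_adj_of_dist_eq_add_one (hA : G.IsAcyclic) {r u w w' : V}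
    (hw : G.Adj w u) (hw' : G.Adj w' u) (hd : G.dist r u = G.dist r w + 1)
    (hd' : G.dist r u = G.dist r w' + 1) : w = w' := by
  have hr : G.Reachable r u := Reachable.of_dist_ne_zero (by omega)
  obtain ⟨q, hq, -⟩ := hr.exists_path_of_dist
  have mem_geodesic : ∀ x, G.Adj x u → G.dist r u = G.dist r x + 1 → x ∈ q.support := by
    intro x hx hdx
    obtain ⟨p, hp, hpl⟩ := (hr.trans hx.symm.reachable).exists_path_of_dist
    refine hA.mem_support_of_ne_mem_support_of_adj_of_isPath hq hp hx.symm fun hu => ?_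
    classical
    have := dist_le (p.takeUntil u hu)
    have := p.length_takeUntil_le_length hu
    omega
  rw [hA.eq_penultimate_of_adj_end hq hw.symm (mem_geodesic w hw hd),
    ← hA.eq_penultimate_of_adj_end hq hw'.symm (mem_geodesic w' hw' hd')]

/-- The neighbour of `u` one step closer to `r`; a junk value at `r` itself. -/
noncomputable def treeParent (G : SimpleGraph V) (r u : V) : V :=
  @Classical.epsilon V ⟨u⟩ fun w => G.Adj w u ∧ G.dist r u = G.dist r w + 1

theorem Connected.treeParent_spec (hc : G.Connected) {r u : V} (hu : u ≠ r) :
    G.Adj (G.treeParent r u) u ∧ G.dist r u = G.dist r (G.treeParent r u) + 1 :=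
  Classical.epsilon_spec ((hc r u).exists_adj_dist_eq_add_one hu)

theorem IsAcyclic.treeParent_eq (hA : G.IsAcyclic) {r u w : V} (hw : G.Adj w u)
    (hd : G.dist r u = G.dist r w + 1) : G.treeParent r u = w :=
  have hspec : G.Adj (G.treeParent r u) u ∧ G.dist r u = G.dist r (G.treeParent r u) + 1 :=
    Classical.epsilon_spec (p := fun w => G.Adj w u ∧ G.dist r u = G.dist r w + 1) ⟨w, hw, hd⟩
  hA.eq_of_adj_of_dist_eq_add_one hspec.1 hw hspec.2 hd

theorem IsTree.treeParent_eq_or (hT : G.IsTree) (r : V) {u x : V} (hux : G.Adj u x) :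
    x ≠ r ∧ G.treeParent r x = u ∨ u ≠ r ∧ G.treeParent r u = x := by
  rcases hT.dist_eq_dist_add_one_of_adj r hux with hd | hd
  · refine Or.inr ⟨fun hur => ?_, hT.isAcyclic.treeParent_eq hux.symm hd⟩
    simp [hur] at hd
  · refine Or.inl ⟨fun hxr => ?_, hT.isAcyclic.treeParent_eq hux hd⟩
    simp [hxr] at hd

end SimpleGraph

theorem isElegantCLabelling_of_windows {V : Type} {G : SimpleGraph V} {L h s : ℕ} [NeZero L]
    (F : V → ZMod L) (k : V → ℕ) (slot : V → V → ℕ) (hh : 0 < h)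
    (hk : ∀ u, h ≤ k u ∧ k u + s + h ≤ L)
    (hslot : ∀ u x, G.Adj u x → slot u x ≤ s)
    (hslot_inj : ∀ u x y, G.Adj u x → G.Adj u y → slot u x = slot u y → x = y)
    (hF : ∀ u x, G.Adj u x → F x = F u + k u + slot u x)
    (hdisj : ∀ u v, G.Adj u v → ∀ i ≤ s, ∀ j ≤ s, F u + k u + i ≠ F v + k v + j) :
    IsElegantCLabelling G h 1 L (fun v => (F v).val) := by
  have hsL : ∀ u, s < L := fun u => by have := hk u; omega
  have hval : ∀ u x, G.Adj u x →
      (((F x).val : ZMod L) - (F u).val).val = k u + slot u x := fun u x hx => by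
    rw [ZMod.natCast_zmod_val, ZMod.natCast_zmod_val, hF u x hx, add_assoc, add_sub_cancel_left,
      ← Nat.cast_add, ZMod.val_cast_of_lt (by have := hk u; have := hslot u x hx; omega)]
  have hne_of_adj_adj : ∀ m u v, G.Adj m u → G.Adj m v → u ≠ v → (F u).val ≠ (F v).val :=
    fun m u v hu hv huv heq => huv <| hslot_inj m u v hu hv <| by
      have hcast := ZMod.val_injective L heq
      rw [hF m u hu, hF m v hv] at hcast
      have := congrArg ZMod.val (add_left_cancel hcast)
      rwa [ZMod.val_cast_of_lt (by have := hslot m u hu; have := hsL m; omega),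
        ZMod.val_cast_of_lt (by have := hslot m v hv; have := hsL m; omega)] at this
  refine ⟨⟨fun v => ZMod.val_lt _, fun u v huv => ?_, fun u v huv => ?_⟩,
    fun u => {a | ∃ i : ℕ, i ≤ s ∧ a = F u + k u + i}, fun u => ⟨_, s, rfl⟩,
    fun u x hx => ⟨slot u x, hslot u x hx, by simpa [ZMod.natCast_zmod_val] using hF u x hx⟩,
    fun u v huv => ?_⟩
  · rw [dist_eq_one_iff_adj] at huv
    rw [le_cycDist_iff (ZMod.val_lt _) (ZMod.val_lt _), hval u v huv]
    have := hslot u v huv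
    have := hk u
    omega
  · rw [Nat.cast_one, one_le_cycDist_iff (ZMod.val_lt _) (ZMod.val_lt _)]
    rcases huv with huv | huv
    · obtain ⟨m, hum, hmv⟩ := exists_adj_adj_of_dist_eq_two huv
      refine hne_of_adj_adj m u v hum.symm hmv fun hvu => ?_
      simp [hvu] at huv
    · obtain ⟨x, y, hux, hxy, hyv⟩ := exists_adj_adj_adj_of_dist_eq_three huv
      intro heq
      exact hdisj x y hxy _ (hslot x u hux.symm) _ (hslot y v hyv)
        (by rw [← hF x u hux.symm, ← hF y v hyv, ZMod.val_injective L heq])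
  · refine Set.eq_empty_iff_forall_notMem.mpr ?_
    rintro _ ⟨⟨i, hi, rfl⟩, ⟨j, hj, hij⟩⟩
    exact hdisj u v huv i hi j hj hij

section Construction

variable {V : Type} [Fintype V] (G : SimpleGraph V) [DecidableRel G.Adj]

noncomputable def neighborIndex (u x : V) : ℕ :=
  if hx : G.Adj u x then (G.neighborFinset u).equivFin ⟨x, (G.mem_neighborFinset u x).mpr hx⟩
  else 0

variable {G}

theorem neighborIndex_lt {u x : V} (hx : G.Adj u x) : neighborIndex G u x < G.degree u := by
  rw [neighborIndex, dif_pos hx, ← G.card_neighborFinset_eq_degree]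
  exact Fin.is_lt _

theorem neighborIndex_le (u x : V) : neighborIndex G u x ≤ G.degree u := by
  by_cases hx : G.Adj u x
  · exact (neighborIndex_lt hx).le
  · simp [neighborIndex, hx]

theorem neighborIndex_inj {u x y : V} (hx : G.Adj u x) (hy : G.Adj u y)
    (hxy : neighborIndex G u x = neighborIndex G u y) : x = y := by
  rw [neighborIndex, neighborIndex, dif_pos hx, dif_pos hy] at hxy
  exact congrArg Subtype.val ((G.neighborFinset u).equivFin.injective (Fin.ext hxy))

variable (G) (r : V) (L Δ h : ℕ)

/-- The neighbour indices at `u`, rotated so that the parent of `u` gets slot `p`. -/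
noncomputable def windowSlot (p : ℕ) (u x : V) : ℕ :=
  (neighborIndex G u x + Δ - neighborIndex G u (G.treeParent r u) + p) % Δ

/-- A vertex in state `σ` has label `σ.label`; the labels of its neighbours fill slots of the
window of `Δ` residues starting at `σ.label + σ.offset`, its parent sitting at `σ.parentSlot`. -/
structure LabelState (L : ℕ) where
  label : ZMod L
  offset : ℕ
  parentSlot : ℕ

/-- The offset makes the window of `c` start `Δ` after the window of `u` or `h` after the label
of `c`, whichever is later; the parent slot is then the position of `σ.label` in the window of
`c`. -/
noncomputable def childState (σ : LabelState L) (u c : V) : LabelState L :=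
  let s := windowSlot G r Δ σ.parentSlot u c
  ⟨σ.label + (σ.offset + s : ℕ), max (Δ - s) h, L - σ.offset - s - max (Δ - s) h⟩

noncomputable def stateAtDepth : ℕ → V → LabelState L
  | 0, _ => ⟨0, h, 0⟩
  | n + 1, u => childState G r L Δ h (stateAtDepth n (G.treeParent r u)) (G.treeParent r u) u

noncomputable def treeState (u : V) : LabelState L :=
  stateAtDepth G r L Δ h (G.dist r u) u

local notation "state" => treeState G r L Δ h

variable {G r L Δ h}

theorem windowSlot_lt (hΔ : 0 < Δ) (p : ℕ) (u x : V) : windowSlot G r Δ p u x < Δ :=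
  Nat.mod_lt _ hΔ

theorem windowSlot_treeParent {p : ℕ} (hp : p < Δ) (u : V) :
    windowSlot G r Δ p u (G.treeParent r u) = p := by
  rw [windowSlot, Nat.add_sub_cancel_left, Nat.add_mod_left, Nat.mod_eq_of_lt hp]

theorem windowSlot_inj (hdeg : ∀ v, G.degree v ≤ Δ) {p : ℕ} {u x y : V} (hx : G.Adj u x)
    (hy : G.Adj u y) (hxy : windowSlot G r Δ p u x = windowSlot G r Δ p u y) : x = y := by
  have := neighborIndex_lt hx
  have := neighborIndex_lt hy
  have := neighborIndex_le (G := G) u (G.treeParent r u)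
  have := hdeg u
  have hmod : neighborIndex G u x ≡ neighborIndex G u y [MOD Δ] := by
    refine Nat.ModEq.add_right_cancel' (Δ - neighborIndex G u (G.treeParent r u) + p) ?_
    unfold windowSlot at hxy
    unfold Nat.ModEq
    rwa [← Nat.add_assoc, ← Nat.add_assoc, ← Nat.add_sub_assoc (by omega),
      ← Nat.add_sub_assoc (by omega)]
  exact neighborIndex_inj hx hy (hmod.eq_of_lt_of_lt (by omega) (by omega))

theorem le_offset_stateAtDepth (n : ℕ) (u : V) : h ≤ (stateAtDepth G r L Δ h n u).offset := by
  cases n <;> simp [stateAtDepth, childState]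

theorem offset_stateAtDepth_le (hhΔ : h ≤ Δ) (n : ℕ) (u : V) :
    (stateAtDepth G r L Δ h n u).offset ≤ Δ := by
  cases n <;> simp [stateAtDepth, childState, hhΔ]

theorem parentSlot_stateAtDepth_lt (hh : 1 ≤ h) (hhΔ : h ≤ Δ) (hL : L + 1 = h + 2 * Δ)
    (n : ℕ) (u : V) : (stateAtDepth G r L Δ h n u).parentSlot < Δ := by
  cases n with
  | zero => simp only [stateAtDepth]; omega
  | succ n =>
    have := le_offset_stateAtDepth (G := G) (r := r) (L := L) (Δ := Δ) (h := h) n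
      (G.treeParent r u)
    have := windowSlot_lt (G := G) (r := r) (Δ := Δ) (by omega)
      (stateAtDepth G r L Δ h n (G.treeParent r u)).parentSlot (G.treeParent r u) u
    simp only [stateAtDepth, childState]
    omega

theorem childState_label_add (hh : 1 ≤ h) (hL : L + 1 = h + 2 * Δ) {σ : LabelState L}
    (hσ : h ≤ σ.offset ∧ σ.offset ≤ Δ) (u c : V) :
    (childState G r L Δ h σ u c).label + (childState G r L Δ h σ u c).offset +
      (childState G r L Δ h σ u c).parentSlot = σ.label := by
  have hs := windowSlot_lt (G := G) (r := r) (Δ := Δ) (by omega) σ.parentSlot u c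
  set s := windowSlot G r Δ σ.parentSlot u c
  have hsum : ((σ.offset + s + max (Δ - s) h + (L - σ.offset - s - max (Δ - s) h) : ℕ) :
      ZMod L) = 0 := by
    rw [show σ.offset + s + max (Δ - s) h + (L - σ.offset - s - max (Δ - s) h) = L by omega]
    exact ZMod.natCast_self L
  simp only [childState]
  push_cast at hsum ⊢
  linear_combination hsum

theorem childState_window_ne (hh : 1 ≤ h) (hhΔ : h ≤ Δ) (hL : L + 1 = h + 2 * Δ)
    (σ : LabelState L) (u c : V) {i j : ℕ} (hi : i ≤ Δ - 1) (hj : j ≤ Δ - 1) :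
    σ.label + σ.offset + i ≠
      (childState G r L Δ h σ u c).label + (childState G r L Δ h σ u c).offset + j := by
  have hs := windowSlot_lt (G := G) (r := r) (Δ := Δ) (by omega) σ.parentSlot u c
  set s := windowSlot G r Δ σ.parentSlot u c
  intro heq
  have hcast : (i : ZMod L) = ((s + max (Δ - s) h + j : ℕ) : ZMod L) := by
    simp only [childState] at heq
    push_cast at heq ⊢
    linear_combination heq
  rw [ZMod.natCast_eq_natCast_iff', Nat.mod_eq_of_lt (show i < L by omega),
    Nat.mod_eq_of_lt (show s + max (Δ - s) h + j < L by omega)] at hcast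
  omega

theorem treeState_eq_childState (hc : G.Connected) {u : V} (hu : u ≠ r) :
    state u = childState G r L Δ h (state (G.treeParent r u)) (G.treeParent r u) u := by
  unfold treeState
  rw [(hc.treeParent_spec hu).2]
  rfl

theorem treeState_label_of_adj (hT : G.IsTree) (hh : 1 ≤ h) (hhΔ : h ≤ Δ)
    (hL : L + 1 = h + 2 * Δ) {u x : V} (hux : G.Adj u x) :
    (state x).label = (state u).label + (state u).offset +
      windowSlot G r Δ (state u).parentSlot u x := by
  rcases hT.treeParent_eq_or r hux with ⟨hxr, hpar⟩ | ⟨hur, hpar⟩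
  · rw [treeState_eq_childState hT.connected hxr, hpar]
    simp only [childState]
    push_cast
    ring
  · have hu := treeState_eq_childState (L := L) (Δ := Δ) (h := h) hT.connected hur
    rw [hpar] at hu
    rw [← hpar, windowSlot_treeParent (p := (state u).parentSlot)
      (parentSlot_stateAtDepth_lt hh hhΔ hL _ _), hpar, hu]
    exact (childState_label_add hh hL
      ⟨le_offset_stateAtDepth _ _, offset_stateAtDepth_le hhΔ _ _⟩ x u).symm

theorem treeState_window_ne (hT : G.IsTree) (hh : 1 ≤ h) (hhΔ : h ≤ Δ) (hL : L + 1 = h + 2 * Δ)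
    {u x : V} (hux : G.Adj u x) {i j : ℕ} (hi : i ≤ Δ - 1) (hj : j ≤ Δ - 1) :
    (state u).label + (state u).offset + i ≠ (state x).label + (state x).offset + j := by
  rcases hT.treeParent_eq_or r hux with ⟨hxr, hpar⟩ | ⟨hur, hpar⟩
  · rw [treeState_eq_childState hT.connected hxr, hpar]
    exact childState_window_ne hh hhΔ hL _ u x hi hj
  · rw [treeState_eq_childState hT.connected hur, hpar]
    exact (childState_window_ne hh hhΔ hL _ x u hj hi).symm

end Construction

theorem SimpleGraph.IsTree.exists_isElegantCLabelling {V : Type} [Fintype V] {G : SimpleGraph V}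
    [DecidableRel G.Adj] (hT : G.IsTree) {h Δ : ℕ} (hh : 1 ≤ h) (hhΔ : h ≤ Δ)
    (hdeg : ∀ v, G.degree v ≤ Δ) : ∃ f : V → ℕ, IsElegantCLabelling G h 1 (h + 2 * Δ - 1) f := by
  obtain ⟨r⟩ := hT.connected.nonempty
  have hL : h + 2 * Δ - 1 + 1 = h + 2 * Δ := by omega
  have : NeZero (h + 2 * Δ - 1) := ⟨by omega⟩
  let state := treeState G r (h + 2 * Δ - 1) Δ h
  exact ⟨_, isElegantCLabelling_of_windows (s := Δ - 1) (fun u => (state u).label)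
    (fun u => (state u).offset) (fun u => windowSlot G r Δ (state u).parentSlot u) hh
    (fun u => ⟨le_offset_stateAtDepth (G := G) _ _,
      by have : (state u).offset ≤ Δ := offset_stateAtDepth_le hhΔ _ _; omega⟩)
    (fun u x _ => Nat.le_sub_one_of_lt (windowSlot_lt (by omega) _ u x))
    (fun u x y hx hy => windowSlot_inj hdeg hx hy)
    (fun u x hux => treeState_label_of_adj hT hh hhΔ hL hux)
    (fun u x hux i hi j hj => treeState_window_ne hT hh hhΔ hL hux hi hj)⟩

namespace IsCLabelling

variable {V : Type} {G : SimpleGraph V} {h ℓ : ℕ} {f : V → ℕ}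

theorem le_cycDist_of_adj (hf : IsCLabelling G h 1 ℓ f) {u v : V} (huv : G.Adj u v) :
    (h : ℤ) ≤ cycDist ℓ (f u) (f v) :=
  hf.2.1 u v (dist_eq_one_iff_adj.mpr huv)

theorem ne_of_adj_of_adj (hf : IsCLabelling G h 1 ℓ f) (hA : G.IsAcyclic) {m u v : V}
    (hu : G.Adj m u) (hv : G.Adj m v) (huv : u ≠ v) : f u ≠ f v :=
  (one_le_cycDist_iff (hf.1 u) (hf.1 v)).mp <| by
    exact_mod_cast hf.2.2 u v (Or.inl (hA.dist_eq_two hu hv huv))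

theorem ne_of_adj_of_adj_of_adj (hf : IsCLabelling G h 1 ℓ f) (hA : G.IsAcyclic) {a b c d : V}
    (hab : G.Adj a b) (hbc : G.Adj b c) (hcd : G.Adj c d) (hac : a ≠ c) (hbd : b ≠ d) :
    f a ≠ f d :=
  (one_le_cycDist_iff (hf.1 a) (hf.1 d)).mp <| by
    exact_mod_cast hf.2.2 a d (Or.inr (hA.dist_eq_three hab hbc hcd hac hbd))

theorem degree_add_card_add_two_mul_le [Fintype V] [DecidableRel G.Adj]
    (hf : IsCLabelling G h 1 ℓ f) (hA : G.IsAcyclic) (hh : 1 ≤ h) {r w : V} (hrw : G.Adj r w)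
    {far : Finset V} (hfar : ∀ j ∈ far, G.Adj r j ∧ j ≠ w ∧ (h : ℤ) ≤ cycDist ℓ (f w) (f j)) :
    G.degree w + far.card + 2 * h ≤ ℓ + 1 := by
  classical
  set C := (G.neighborFinset w).erase r
  have hC : ∀ c ∈ C, G.Adj w c ∧ c ≠ r := fun c hc => by
    rw [Finset.mem_erase, mem_neighborFinset] at hc
    exact ⟨hc.2, hc.1⟩
  have hCcard : C.card + 1 = G.degree w := by
    rw [Finset.card_erase_add_one ((G.mem_neighborFinset w r).mpr hrw.symm),
      card_neighborFinset_eq_degree]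
  have hfr_ne : ∀ j ∈ far, f r ≠ f j := fun j hj =>
    (one_le_cycDist_iff (hf.1 r) (hf.1 j)).mp
      ((Int.natCast_pos.mpr hh).trans_le (hf.le_cycDist_of_adj (hfar j hj).1))
  have hS : (insert (f r) (C.image f ∪ far.image f)).card = C.card + far.card + 1 := by
    rw [Finset.card_insert_of_notMem, Finset.card_union_of_disjoint, Finset.card_image_of_injOn,
      Finset.card_image_of_injOn]
    · exact fun x hx y hy hxy => by_contra fun hne =>
        hf.ne_of_adj_of_adj hA (hfar x hx).1 (hfar y hy).1 hne hxy
    · exact fun x hx y hy hxy => by_contra fun hne =>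
        hf.ne_of_adj_of_adj hA (hC x hx).1 (hC y hy).1 hne hxy
    · simp only [Finset.disjoint_left, Finset.mem_image]
      rintro _ ⟨c, hc, rfl⟩ ⟨j, hj, hcj⟩
      exact hf.ne_of_adj_of_adj_of_adj hA (hC c hc).1.symm hrw.symm (hfar j hj).1 (hC c hc).2
        (hfar j hj).2.1.symm hcj.symm
    · simp only [Finset.mem_union, Finset.mem_image, not_or, not_exists, not_and]
      exact ⟨fun c hc hcr => hf.ne_of_adj_of_adj hA hrw.symm (hC c hc).1 (hC c hc).2.symm hcr.symm,
        fun j hj hjr => hfr_ne j hj hjr.symm⟩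
  have hbound := card_add_two_mul_le_of_le_cycDist (S := insert (f r) (C.image f ∪ far.image f))
    (h := h) (hf.1 w) <| by
      simp only [Finset.mem_insert, Finset.mem_union, Finset.mem_image]
      rintro _ (rfl | ⟨c, hc, rfl⟩ | ⟨j, hj, rfl⟩)
      · exact ⟨hf.1 r, hf.le_cycDist_of_adj hrw.symm⟩
      · exact ⟨hf.1 c, hf.le_cycDist_of_adj (hC c hc).1⟩
      · exact ⟨hf.1 j, (hfar j hj).2.2⟩
  omega

theorem card_le_sub_one_of_val_sub_lt (hf : IsCLabelling G h 1 ℓ f) (hA : G.IsAcyclic)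
    {r w : V} (hrw : G.Adj r w)
    {near : Finset V} (hnear : ∀ j ∈ near, G.Adj r j ∧ j ≠ w ∧
      ((f w : ZMod ℓ) - f r).val ≤ ((f j : ZMod ℓ) - f r).val ∧
      ((f j : ZMod ℓ) - f r).val < ((f w : ZMod ℓ) - f r).val + h) :
    near.card ≤ h - 1 := by
  have hinj : Set.InjOn f near := fun x hx y hy hxy => by_contra fun hne =>
    hf.ne_of_adj_of_adj hA (hnear x hx).1 (hnear y hy).1 hne hxy
  have hcard := card_le_of_val_natCast_sub_mem (c := f r) (S := near.image f)
    (T := Finset.Ioo ((f w : ZMod ℓ) - f r).val (((f w : ZMod ℓ) - f r).val + h))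
    (by simpa using fun j _ => hf.1 j) <| by
      simp only [Finset.mem_image, forall_exists_index, and_imp, forall_apply_eq_imp_iff₂]
      intro j hj
      obtain ⟨hrj, hjw, hlo, hhi⟩ := hnear j hj
      have hne : ((f j : ZMod ℓ) - f r).val ≠ ((f w : ZMod ℓ) - f r).val := fun heq =>
        hf.ne_of_adj_of_adj hA hrj hrw hjw (eq_of_val_natCast_sub_eq (hf.1 j) (hf.1 w) heq)
      rw [Finset.mem_Ioo]
      omega
  rw [Finset.card_image_of_injOn hinj, Nat.card_Ioo] at hcard
  omega

theorem add_two_mul_le [Fintype V] [DecidableRel G.Adj] {Δ : ℕ}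
    (hf : IsCLabelling G h 1 ℓ f) (hA : G.IsAcyclic) (hh : 1 ≤ h) (hΔ : 0 < Δ) {r : V}
    (hr : G.degree r = Δ) (hnbr : ∀ v, G.Adj r v → G.degree v = Δ) :
    h + 2 * Δ ≤ ℓ + 1 := by
  classical
  have : NeZero ℓ := ⟨(Nat.zero_lt_of_lt (hf.1 r)).ne'⟩
  set φ : V → ℕ := fun x => ((f x : ZMod ℓ) - f r).val with hφ
  have hNcard : (G.neighborFinset r).card = Δ := by rw [card_neighborFinset_eq_degree, hr]
  obtain ⟨w, hwN, hwmin⟩ :=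
    (G.neighborFinset r).exists_min_image φ (Finset.card_pos.mp (hNcard ▸ hΔ))
  set far := ((G.neighborFinset r).erase w).filter fun j => φ w + h ≤ φ j
  set near := ((G.neighborFinset r).erase w).filter fun j => ¬φ w + h ≤ φ j
  have hsplit : far.card + near.card + 1 = Δ := by
    rw [Finset.card_filter_add_card_filter_not, Finset.card_erase_add_one hwN, hNcard]
  rw [mem_neighborFinset] at hwN
  have hfar := hf.degree_add_card_add_two_mul_le hA hh hwN (far := far) fun j hj => by
    simp only [far, Finset.mem_filter, Finset.mem_erase, mem_neighborFinset] at hj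
    obtain ⟨⟨hjw, hrj⟩, hle⟩ := hj
    simp only [hφ] at hle
    refine ⟨hrj, hjw, (le_cycDist_iff (hf.1 w) (hf.1 j)).mpr ?_⟩
    have hsub : (f j : ZMod ℓ) - f w = ((f j : ZMod ℓ) - f r) - ((f w : ZMod ℓ) - f r) := by ring
    have := ((le_cycDist_iff (hf.1 r) (hf.1 j)).mp (hf.le_cycDist_of_adj hrj)).2
    rw [hsub, ZMod.val_sub (by omega)]
    omega
  have hnear := hf.card_le_sub_one_of_val_sub_lt hA hwN (near := near) fun j hj => by
    simp only [near, Finset.mem_filter, Finset.mem_erase, mem_neighborFinset] at hj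
    obtain ⟨⟨hjw, hrj⟩, hlt⟩ := hj
    simp only [hφ] at hlt
    exact ⟨hrj, hjw, hwmin j ((G.mem_neighborFinset r j).mpr hrj), by omega⟩
  rw [hnbr w hwN] at hfar
  omega

end IsCLabelling

theorem stmt19_general {V : Type} [Fintype V] (G : SimpleGraph V) [DecidableRel G.Adj]
    (hT : G.IsTree) (h : ℕ) (hh : 1 ≤ h) (hhD : h ≤ G.maxDegree)
    (hsub : ∃ r : V, G.degree r = G.maxDegree ∧
      ∀ v : V, G.Adj r v → G.degree v = G.maxDegree) :
    sigmaNum G h 1 = h + 2 * G.maxDegree - 1 ∧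
    sigmaStar G h 1 = h + 2 * G.maxDegree - 1 := by
  obtain ⟨r, hr, hnbr⟩ := hsub
  obtain ⟨f, hf⟩ := hT.exists_isElegantCLabelling hh hhD G.degree_le_maxDegree
  have hlower : ∀ ℓ (g : V → ℕ), IsCLabelling G h 1 ℓ g → h + 2 * G.maxDegree - 1 ≤ ℓ :=
    fun ℓ g hg => by
      have := hg.add_two_mul_le hT.isAcyclic hh (by omega) hr hnbr
      omega
  refine ⟨IsLeast.csInf_eq ⟨⟨by omega, f, hf.1⟩, ?_⟩, IsLeast.csInf_eq ⟨⟨by omega, f, hf⟩, ?_⟩⟩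
  · rintro ℓ ⟨-, g, hg⟩
    exact hlower ℓ g hg
  · rintro ℓ ⟨-, g, hg⟩
    exact hlower ℓ g hg.1

theorem stmt19 {V : Type} [Fintype V] (G : SimpleGraph V) [DecidableRel G.Adj]
    (hT : G.IsTree) (hdiam : ∃ u v : V, 3 ≤ G.dist u v) (hD : 3 ≤ G.maxDegree)
    (h : ℕ) (hh : 1 ≤ h) (hhD : h ≤ G.maxDegree)
    (hsub : ∃ r : V, G.degree r = G.maxDegree ∧
      ∀ v : V, G.Adj r v → G.degree v = G.maxDegree) :
    sigmaNum G h 1 = h + 2 * G.maxDegree - 1 ∧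
    sigmaStar G h 1 = h + 2 * G.maxDegree - 1 :=
  stmt19_general G hT h hh hhD hsub
end
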